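/- Suppose η > F₁ + F₂. Then for any measurable switching signal σ : [0,∞) → {1,2,3,4} and any continuous X : [0,∞) → [0,∞)² with X(t) = X(0) + ∫₀ᵗ G(σ(τ), X(τ)) dτ for all t ≥ 0, one has X₁(t) + X₂(t) ≥ X₁(0) + X₂(0) + (η − F₁ − F₂)·t for all t ≥ 0; in particular X₁(t) + X₂(t) → ∞ as t → ∞. -/

import Mathlib

/-!
In every mode the two inflows sum to the demand `η`, while each outflow `f_k` never exceeds `F_k`,
so the integrand of `X₁ + X₂` is at least `η - F₁ - F₂`. Integrating needs only that the switched
vector field is integrable along the trajectory, which holds because the finitely many continuous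
fields are bounded on the compact image of `[0, t]`.
-/

open Real Set MeasureTheory Filter

/-- Inflow function `μ_k(s, x)` for modes `s ∈ {1,2,3,4}` (indexed `0..3`) and links
`k ∈ {1,2}` (indexed `0..1`). -/
noncomputable def mu (β η : ℝ) (s : Fin 4) (k : Fin 2) (x : ℝ × ℝ) : ℝ :=
  match s.val, k.val with
  | 0, 0 => η * Real.exp (-β * x.1) / (Real.exp (-β * x.1) + Real.exp (-β * x.2))
  | 0, _ => η * Real.exp (-β * x.2) / (Real.exp (-β * x.1) + Real.exp (-β * x.2))
  | 1, 0 => η / (1 + Real.exp (-β * x.2))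
  | 1, _ => η * Real.exp (-β * x.2) / (1 + Real.exp (-β * x.2))
  | 2, 0 => η * Real.exp (-β * x.1) / (Real.exp (-β * x.1) + 1)
  | 2, _ => η / (Real.exp (-β * x.1) + 1)
  | _, _ => η / 2

/-- Outflow (sending) function `f_k(y) = F_k (1 - e^{-y})` of link `k`. -/
noncomputable def fOut (F : Fin 2 → ℝ) (k : Fin 2) (y : ℝ) : ℝ :=
  F k * (1 - Real.exp (-y))

/-- The mode-`s` vector field `G(s,x) = (μ₁(s,x) − f₁(x₁), μ₂(s,x) − f₂(x₂))`. -/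
noncomputable def Gvec (β η : ℝ) (F : Fin 2 → ℝ) (s : Fin 4) (x : ℝ × ℝ) : ℝ × ℝ :=
  (mu β η s 0 x - fOut F 0 x.1, mu β η s 1 x - fOut F 1 x.2)

/-- The `k`-th coordinate of `x ∈ ℝ²`. -/
def coord (x : ℝ × ℝ) (k : Fin 2) : ℝ := if k = 0 then x.1 else x.2

theorem mu_zero_add_mu_one (β η : ℝ) (s : Fin 4) (x : ℝ × ℝ) :
    mu β η s 0 x + mu β η s 1 x = η := by
  have h₁ : 0 < Real.exp (-β * x.1) := Real.exp_pos _
  have h₂ : 0 < Real.exp (-β * x.2) := Real.exp_pos _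
  fin_cases s <;> simp only [mu, Fin.val_zero, Fin.val_one]
  · field_simp
  · field_simp
  · field_simp
  · ring

theorem fOut_le {F : Fin 2 → ℝ} {k : Fin 2} (hF : 0 ≤ F k) (y : ℝ) : fOut F k y ≤ F k := by
  have := mul_nonneg hF (Real.exp_pos (-y)).le
  rw [fOut]
  linarith

theorem Gvec_fst_add_snd (β η : ℝ) (F : Fin 2 → ℝ) (s : Fin 4) (x : ℝ × ℝ) :
    (Gvec β η F s x).1 + (Gvec β η F s x).2 = η - fOut F 0 x.1 - fOut F 1 x.2 := by
  rw [Gvec]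
  linarith [mu_zero_add_mu_one β η s x]

theorem sub_le_Gvec_fst_add_snd (β η : ℝ) {F : Fin 2 → ℝ} (hF : ∀ k, 0 ≤ F k) (s : Fin 4)
    (x : ℝ × ℝ) : η - F 0 - F 1 ≤ (Gvec β η F s x).1 + (Gvec β η F s x).2 := by
  rw [Gvec_fst_add_snd]
  linarith [fOut_le (hF 0) x.1, fOut_le (hF 1) x.2]

theorem mu_continuous (β η : ℝ) (s : Fin 4) (k : Fin 2) : Continuous (mu β η s k) := by
  have h₁ (x : ℝ × ℝ) : 0 < Real.exp (-β * x.1) := Real.exp_pos _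
  have h₂ (x : ℝ × ℝ) : 0 < Real.exp (-β * x.2) := Real.exp_pos _
  fin_cases s <;> fin_cases k <;> unfold mu <;>
    exact Continuous.div (by fun_prop) (by fun_prop) fun x => by positivity

theorem Gvec_continuous (β η : ℝ) (F : Fin 2 → ℝ) (s : Fin 4) : Continuous (Gvec β η F s) := by
  unfold Gvec fOut
  exact ((mu_continuous β η s 0).sub (by fun_prop)).prodMk
    ((mu_continuous β η s 1).sub (by fun_prop))

theorem intervalIntegrable_comp_switching {ι α E : Type*} [Finite ι] [MeasurableSpace ι]
    [MeasurableSingletonClass ι] [TopologicalSpace α] [MeasurableSpace α] [BorelSpace α]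
    [NormedAddCommGroup E] [MeasurableSpace E] [BorelSpace E] [SecondCountableTopology E]
    {f : ι → α → E} (hf : ∀ i, Continuous (f i)) {σ : ℝ → ι} (hσ : Measurable σ) {X : ℝ → α}
    {a b : ℝ} (hX : ContinuousOn X (uIcc a b)) :
    IntervalIntegrable (fun τ => f (σ τ) (X τ)) volume a b := by
  have hmeas : Measurable fun p : α × ι => f p.2 p.1 :=
    measurable_from_prod_countable_left fun i => (hf i).measurable
  have hXmeas : AEMeasurable X (volume.restrict (uIoc a b)) :=
    (hX.mono uIoc_subset_uIcc).aemeasurable measurableSet_uIoc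
  have hK : IsCompact (X '' uIcc a b) := isCompact_uIcc.image_of_continuousOn hX
  choose C hC using fun i => hK.exists_bound_of_continuousOn (hf i).continuousOn
  obtain ⟨M, hM⟩ := Finite.exists_le C
  rw [intervalIntegrable_iff]
  refine IntegrableOn.of_bound measure_Ioc_lt_top
    (hmeas.comp_aemeasurable (hXmeas.prodMk hσ.aemeasurable)).aestronglyMeasurable M ?_
  refine ae_restrict_of_forall_mem measurableSet_uIoc fun τ hτ => ?_
  exact (hC (σ τ) (X τ) (mem_image_of_mem X (uIoc_subset_uIcc hτ))).trans (hM (σ τ))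

theorem intervalIntegral_fst_add_snd {μ : Measure ℝ} {f : ℝ → ℝ × ℝ} {a b : ℝ}
    (hf : IntervalIntegrable f μ a b) :
    ∫ τ in a..b, ((f τ).1 + (f τ).2) ∂μ = (∫ τ in a..b, f τ ∂μ).1 + (∫ τ in a..b, f τ ∂μ).2 :=
  (ContinuousLinearMap.fst ℝ ℝ ℝ + ContinuousLinearMap.snd ℝ ℝ ℝ).intervalIntegral_comp_comm hf

theorem stmt17_general (β η : ℝ) (F : Fin 2 → ℝ)
    (hF : ∀ k, 0 < F k) (hcap : η > F 0 + F 1)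
    (σ : ℝ → Fin 4) (hσ : Measurable σ)
    (X : ℝ → ℝ × ℝ) (hXcont : ContinuousOn X (Set.Ici (0 : ℝ)))
    (hXeq : ∀ t : ℝ, 0 ≤ t → X t = X 0 + ∫ τ in (0 : ℝ)..t, Gvec β η F (σ τ) (X τ)) :
    (∀ t : ℝ, 0 ≤ t →
      (X t).1 + (X t).2 ≥ (X 0).1 + (X 0).2 + (η - F 0 - F 1) * t) ∧
    Filter.Tendsto (fun t : ℝ => (X t).1 + (X t).2) Filter.atTop Filter.atTop := by
  have hlinear (t : ℝ) (ht : 0 ≤ t) :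
      (X t).1 + (X t).2 ≥ (X 0).1 + (X 0).2 + (η - F 0 - F 1) * t := by
    have hXcont' : ContinuousOn X (uIcc 0 t) := by
      rw [uIcc_of_le ht]
      exact hXcont.mono Icc_subset_Ici_self
    have hint := intervalIntegrable_comp_switching (Gvec_continuous β η F) hσ hXcont'
    have hrate : (η - F 0 - F 1) * t ≤
        ∫ τ in (0 : ℝ)..t, ((Gvec β η F (σ τ) (X τ)).1 + (Gvec β η F (σ τ) (X τ)).2) := by
      have hint_sum := intervalIntegrable_comp_switching
        (fun s => (Gvec_continuous β η F s).fst.add (Gvec_continuous β η F s).snd) hσ hXcont'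
      simpa only [intervalIntegral.integral_const, smul_eq_mul, sub_zero, mul_comm,
        Pi.add_apply] using intervalIntegral.integral_mono_on ht intervalIntegrable_const hint_sum
        fun τ _ => sub_le_Gvec_fst_add_snd β η (fun k => (hF k).le) (σ τ) (X τ)
    rw [hXeq t ht, Prod.fst_add, Prod.snd_add, add_add_add_comm,
      ← intervalIntegral_fst_add_snd hint]
    linarith
  refine ⟨hlinear,
    tendsto_atTop_mono' atTop (f₁ := fun t => (X 0).1 + (X 0).2 + (η - F 0 - F 1) * t) ?_ ?_⟩
  · filter_upwards [eventually_ge_atTop 0] with t ht using hlinear t ht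
  · exact tendsto_atTop_add_const_left _ _ (tendsto_id.const_mul_atTop (by linarith))

/-- if the demand exceeds the network capacity, `η > F₁ + F₂`, then every
trajectory of the switched dynamics in the nonnegative orthant grows at least linearly:
`X₁(t) + X₂(t) ≥ X₁(0) + X₂(0) + (η − F₁ − F₂) t`, hence `X₁(t) + X₂(t) → ∞`. -/
theorem stmt17 (β η : ℝ) (F : Fin 2 → ℝ) (hβ : 0 < β) (hη : 0 < η)
    (hF : ∀ k, 0 < F k) (hcap : η > F 0 + F 1)
    (σ : ℝ → Fin 4) (hσ : Measurable σ)
    (X : ℝ → ℝ × ℝ) (hXcont : ContinuousOn X (Set.Ici (0 : ℝ)))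
    (hXnn : ∀ t : ℝ, 0 ≤ t → X t ∈ Set.Ici (0 : ℝ) ×ˢ Set.Ici (0 : ℝ))
    (hXeq : ∀ t : ℝ, 0 ≤ t → X t = X 0 + ∫ τ in (0 : ℝ)..t, Gvec β η F (σ τ) (X τ)) :
    (∀ t : ℝ, 0 ≤ t →
      (X t).1 + (X t).2 ≥ (X 0).1 + (X 0).2 + (η - F 0 - F 1) * t) ∧
    Filter.Tendsto (fun t : ℝ => (X t).1 + (X t).2) Filter.atTop Filter.atTop :=
  stmt17_general β η F hF hcap σ hσ X hXcont hXeq
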